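/- arXiv:2604.26913 — 3 statements merged into one kernel-verified Lean document; each statement's English description precedes it below -/
import Mathlib

section
/- Let M ⊂ ℝ^d be an affine subspace and φ : M \ {0} → S^{d-1}, x ↦ x/‖x‖. Then φ(M \ {0}) is a null set with respect to the uniform (surface) measure on S^{d-1} in each of the following cases: (i) 0 ∈ M and dim(M) < d; (ii) 0 ∉ M and dim(M) < d − 1. -/
/-!
The image of `M \ {0}` under radial projection lies in the sphere's trace of a proper linear
subspace `W ⊇ M`: in case (i) `W` is the direction of `M`, in case (ii) it is the span of the
direction and one point of `M`, of dimension at most `dim M + 1 < d`. Since `W` is a cone, the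
`toSphere` measure of its trace is a multiple of the Haar measure of a subset of `W`,
which vanishes because `W` is a proper subspace.
-/

open MeasureTheory Metric Module

variable {k V : Type*} [Field k] [AddCommGroup V] [Module k V]

theorem Submodule.ne_top_of_finrank_lt {W : Submodule k V} (h : finrank k W < finrank k V) :
    W ≠ ⊤ := fun htop => by
  rw [htop, finrank_top] at h
  exact h.false

namespace AffineSubspace

theorem coe_subset_direction_of_zero_mem {M : AffineSubspace k V} (h0 : (0 : V) ∈ M) :
    (M : Set V) ⊆ M.direction := fun x hx => by
  simpa using vsub_mem_direction hx h0

theorem coe_subset_direction_sup_span_singleton {M : AffineSubspace k V} {p : V} (hp : p ∈ M) :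
    (M : Set V) ⊆ (M.direction ⊔ k ∙ p : Submodule k V) := fun x hx => by
  rw [← sub_add_cancel x p]
  exact Submodule.add_mem_sup (by simpa using vsub_mem_direction hx hp)
    (Submodule.mem_span_singleton_self p)

variable [FiniteDimensional k V]

theorem exists_submodule_ne_top_of_finrank_direction_add_one_lt (M : AffineSubspace k V)
    (h : finrank k M.direction + 1 < finrank k V) :
    ∃ W : Submodule k V, W ≠ ⊤ ∧ (M : Set V) ⊆ W := by
  rcases (M : Set V).eq_empty_or_nonempty with hM | ⟨p, hp⟩
  · exact ⟨⊥, Submodule.ne_top_of_finrank_lt (by rw [finrank_bot]; omega), by simp [hM]⟩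
  refine ⟨M.direction ⊔ k ∙ p, Submodule.ne_top_of_finrank_lt ?_,
    coe_subset_direction_sup_span_singleton hp⟩
  have hspan : finrank k (k ∙ p) ≤ 1 := (finrank_span_le_card {p}).trans (by simp)
  have hsup := Submodule.finrank_add_le_finrank_add_finrank M.direction (k ∙ p)
  omega

end AffineSubspace

namespace MeasureTheory.Measure

variable {E : Type*} [NormedAddCommGroup E] [NormedSpace ℝ E] [MeasurableSpace E] [BorelSpace E]
  [FiniteDimensional ℝ E]

theorem toSphere_preimage_submodule_eq_zero (μ : Measure E) [μ.IsAddHaarMeasure]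
    {W : Submodule ℝ E} (hW : W ≠ ⊤) :
    μ.toSphere ((↑) ⁻¹' (W : Set E)) = 0 := by
  have hmeas : MeasurableSet ((↑) ⁻¹' (W : Set E) : Set (sphere (0 : E) 1)) :=
    (Submodule.closed_of_finiteDimensional W).measurableSet.preimage measurable_subtype_coe
  rw [toSphere_apply' _ hmeas]
  refine mul_eq_zero_of_right _ (measure_mono_null ?_ (addHaar_submodule μ W hW))
  rintro _ ⟨t, -, _, ⟨x, hx, rfl⟩, rfl⟩
  exact W.smul_mem t hx

end MeasureTheory.Measure

theorem stmt9 {d : ℕ} (M : AffineSubspace ℝ (EuclideanSpace ℝ (Fin d)))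
    (hcase : ((0 : EuclideanSpace ℝ (Fin d)) ∈ M ∧ Module.finrank ℝ M.direction < d)
      ∨ ((0 : EuclideanSpace ℝ (Fin d)) ∉ M ∧ Module.finrank ℝ M.direction < d - 1)) :
    (volume : Measure (EuclideanSpace ℝ (Fin d))).toSphere
      {y : sphere (0 : EuclideanSpace ℝ (Fin d)) 1 |
        ∃ x : EuclideanSpace ℝ (Fin d), x ∈ M ∧ x ≠ 0 ∧ (y : EuclideanSpace ℝ (Fin d)) = ‖x‖⁻¹ • x}
      = 0 := by
  obtain ⟨W, hW, hMW⟩ : ∃ W : Submodule ℝ (EuclideanSpace ℝ (Fin d)),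
      W ≠ ⊤ ∧ (M : Set (EuclideanSpace ℝ (Fin d))) ⊆ W := by
    rcases hcase with ⟨h0, hlt⟩ | ⟨-, hlt⟩
    · exact ⟨M.direction, Submodule.ne_top_of_finrank_lt (by simpa using hlt),
        M.coe_subset_direction_of_zero_mem h0⟩
    · refine M.exists_submodule_ne_top_of_finrank_direction_add_one_lt ?_
      rw [finrank_euclideanSpace_fin]
      omega
  refine measure_mono_null ?_ (volume.toSphere_preimage_submodule_eq_zero hW)
  rintro y ⟨x, hxM, -, hyx⟩
  rw [Set.mem_preimage, hyx]
  exact W.smul_mem _ (hMW hxM)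
end

section
/- Let A ∈ ℝ^{m×d}, B ∈ ℝ^{ℓ×d} with BᵀB ≻ 0 and let v ∈ S^{d-1} be such that v is not a generalized eigenvector of (AᵀA, BᵀB). Then for x drawn uniformly on S^{d-1}, almost surely γ(x) := ⟨x, AᵀAx⟩⟨BᵀBx, v⟩ − ⟨x, BᵀBx⟩⟨AᵀAx, v⟩ ≠ 0 and α(x) := ⟨v, AᵀAx⟩⟨v, BᵀBv⟩ − ⟨v, BᵀBx⟩⟨v, AᵀAv⟩ ≠ 0. -/
/-! The zero set of a nonzero polynomial on `ℝⁿ` is Lebesgue-null (Fubini and induction on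
`n`), and the measure `toSphere` of a set only depends on the cone over it; `γ` and `α` are
homogeneous polynomials, so it suffices that neither vanishes identically. Put
`w := ⟪v, Tv⟫ • Sv - ⟪v, Sv⟫ • Tv` for `S = AᵀA`, `T = BᵀB`; it is nonzero since
`⟪v, Tv⟫ > 0` and `v` is not a generalized eigenvector. By symmetry of `S` and `T`,
`α x = ⟪w, x⟫`, and `t ↦ γ (v + t • w)` is a cubic with linear coefficient `‖w‖²`. -/

open Matrix MeasureTheory Metric RealInnerProductSpace

theorem MeasureTheory.Measure.toSphere_setOf_eq_zero {E : Type*} [NormedAddCommGroup E]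
    [NormedSpace ℝ E] [MeasurableSpace E] [BorelSpace E] (μ : Measure E) {f : E → ℝ}
    (hf : Continuous f) (hcone : ∀ x, f x = 0 → ∀ r : ℝ, 0 < r → f (r • x) = 0)
    (hnull : μ {x | f x = 0} = 0) : μ.toSphere {x : sphere (0 : E) 1 | f x = 0} = 0 := by
  have hmeas : MeasurableSet {x : sphere (0 : E) 1 | f x = 0} :=
    (isClosed_eq (hf.comp continuous_subtype_val) continuous_const).measurableSet
  rw [μ.toSphere_apply' hmeas, measure_mono_null _ hnull, mul_zero]
  rintro _ ⟨r, hr, _, ⟨x, hx, rfl⟩, rfl⟩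
  exact hcone _ hx r hr.1

namespace MvPolynomial

theorem volume_setOf_eval_eq_zero {n : ℕ} {P : MvPolynomial (Fin n) ℝ} (hP : P ≠ 0) :
    volume {x : Fin n → ℝ | eval x P = 0} = 0 := by
  induction n with
  | zero =>
    obtain ⟨a, rfl⟩ := C_surjective (Fin 0) P
    have ha : a ≠ 0 := by rintro rfl; exact hP C_0
    simp [ha]
  | succ n ih =>
    set Q := finSuccEquiv ℝ n P
    have hQ : Q ≠ 0 := (map_ne_zero_iff _ (finSuccEquiv ℝ n).injective).mpr hP
    have hcons :
        Continuous fun q : (Fin n → ℝ) × ℝ => (Fin.cons q.2 q.1 : Fin (n + 1) → ℝ) :=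
      continuous_pi <| Fin.cases (by simpa using continuous_snd) fun j => by
        simpa [Function.comp_def] using (continuous_apply j).comp continuous_fst
    set s : Set ((Fin n → ℝ) × ℝ) := {q | eval (Fin.cons q.2 q.1) P = 0}
    have hs : MeasurableSet s :=
      (isClosed_singleton.preimage ((continuous_eval P).comp hcons)).measurableSet
    have hmp : MeasurePreserving (Prod.swap ∘ MeasurableEquiv.piFinSuccAbove (fun _ => ℝ) 0)
        volume ((volume : Measure (Fin n → ℝ)).prod volume) :=
      Measure.measurePreserving_swap.comp (volume_preserving_piFinSuccAbove (fun _ => ℝ) 0)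
    have hpre : Prod.swap ∘ MeasurableEquiv.piFinSuccAbove (fun _ => ℝ) 0 ⁻¹' s =
        {x | eval x P = 0} := by
      ext x
      simp [s, MeasurableEquiv.piFinSuccAbove_apply, Fin.insertNthEquiv_zero]
    -- Off a null set of `y`, the fibre of `s` over `y` is the finite root set of `Q` at `y`.
    have hlc : ∀ᵐ y : Fin n → ℝ, eval y Q.leadingCoeff ≠ 0 := by
      simpa [ae_iff] using ih (Polynomial.leadingCoeff_ne_zero.mpr hQ)
    rw [← hpre, hmp.measure_preimage hs.nullMeasurableSet, Measure.measure_prod_null hs]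
    filter_upwards [hlc] with y hy
    have hQy : Q.map (eval y) ≠ 0 := fun h => hy <| by
      simpa using congrArg (Polynomial.coeff · Q.natDegree) h
    have hfibre : Prod.mk y ⁻¹' s = {a | (Q.map (eval y)).IsRoot a} := by
      ext a
      simp [s, Q, eval_eq_eval_mv_eval']
    exact hfibre ▸ (Polynomial.finite_setOfPred_isRoot hQy).measure_zero _

end MvPolynomial

lemma eq_zero_of_forall_cubic_eq_zero {a b c : ℝ}
    (h : ∀ t : ℝ, t * a + t ^ 2 * b + t ^ 3 * c = 0) : a = 0 := by
  linear_combination (2 / 3 : ℝ) * h 1 - (2 / 3 : ℝ) * h (-1) - (1 / 12 : ℝ) * h 2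
    + (1 / 12 : ℝ) * h (-2)

section Pencil

variable {E : Type*} [NormedAddCommGroup E] [InnerProductSpace ℝ E]
  (S T : E →ₗ[ℝ] E) (v : E)

def pencilGamma (x : E) : ℝ := ⟪x, S x⟫ * ⟪T x, v⟫ - ⟪x, T x⟫ * ⟪S x, v⟫

def pencilAlpha (x : E) : ℝ := ⟪v, S x⟫ * ⟪v, T v⟫ - ⟪v, T x⟫ * ⟪v, S v⟫

def pencilResidual : E := ⟪v, T v⟫ • S v - ⟪v, S v⟫ • T v

lemma pencilGamma_smul (r : ℝ) (x : E) :
    pencilGamma S T v (r • x) = r ^ 3 * pencilGamma S T v x := by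
  simp only [pencilGamma, map_smul, real_inner_smul_left, real_inner_smul_right]
  ring

variable {S T v}

lemma pencilResidual_ne_zero (hTv : ⟪v, T v⟫ ≠ 0) (hv : ¬∃ μ : ℝ, S v = μ • T v) :
    pencilResidual S T v ≠ 0 := by
  intro h
  refine hv ⟨⟪v, T v⟫⁻¹ * ⟪v, S v⟫, ?_⟩
  rw [pencilResidual, sub_eq_zero] at h
  rw [mul_smul, ← h, inv_smul_smul₀ hTv]

lemma pencilAlpha_eq_inner (hS : S.IsSymmetric) (hT : T.IsSymmetric) (x : E) :
    pencilAlpha S T v x = ⟪pencilResidual S T v, x⟫ := by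
  rw [pencilAlpha, pencilResidual, inner_sub_left, real_inner_smul_left, real_inner_smul_left,
    hS, hT]
  ring

lemma pencilGamma_add_smul (hS : S.IsSymmetric) (hT : T.IsSymmetric) (t : ℝ) (y : E) :
    pencilGamma S T v (v + t • y) = t * ⟪pencilResidual S T v, y⟫
      + t ^ 2 * (⟪y, S y⟫ * ⟪v, T v⟫ - ⟪y, T y⟫ * ⟪v, S v⟫)
      + t ^ 3 * pencilGamma S T v y := by
  have hSy : ⟪y, S v⟫ = ⟪v, S y⟫ := (real_inner_comm _ _).trans (hS v y)
  have hTy : ⟪y, T v⟫ = ⟪v, T y⟫ := (real_inner_comm _ _).trans (hT v y)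
  simp only [pencilGamma, pencilResidual, map_add, map_smul, inner_add_left, inner_add_right,
    inner_sub_left, real_inner_smul_left, real_inner_smul_right, hS _ v, hT _ v, hS v y, hT v y,
    hSy, hTy]
  ring

lemma exists_pencilGamma_ne_zero (hS : S.IsSymmetric) (hT : T.IsSymmetric)
    (hw : pencilResidual S T v ≠ 0) : ∃ x, pencilGamma S T v x ≠ 0 := by
  by_contra! h
  have hcubic t := (pencilGamma_add_smul hS hT t (pencilResidual S T v)).symm.trans (h _)
  exact hw (inner_self_eq_zero.mp (eq_zero_of_forall_cubic_eq_zero hcubic))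

end Pencil

section PolynomialFunctions

variable {d : ℕ}

noncomputable def euclideanPolyFunctions (d : ℕ) :
    Subalgebra ℝ (EuclideanSpace ℝ (Fin d) → ℝ) :=
  (MvPolynomial.aeval fun i (x : EuclideanSpace ℝ (Fin d)) => x i).range

lemma aeval_euclidean_coord_apply (P : MvPolynomial (Fin d) ℝ) (x : EuclideanSpace ℝ (Fin d)) :
    MvPolynomial.aeval (fun i (x : EuclideanSpace ℝ (Fin d)) => x i) P x =
      MvPolynomial.eval (fun i => x i) P := by
  show Pi.evalAlgHom ℝ (fun _ => ℝ) x (MvPolynomial.aeval _ P) = _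
  rw [← AlgHom.comp_apply, MvPolynomial.comp_aeval]
  rfl

namespace euclideanPolyFunctions

variable {f : EuclideanSpace ℝ (Fin d) → ℝ}

lemma continuous_of_mem (hf : f ∈ euclideanPolyFunctions d) : Continuous f := by
  obtain ⟨P, rfl⟩ := (AlgHom.mem_range _).mp hf
  simp_rw [funext (aeval_euclidean_coord_apply P)]
  exact (MvPolynomial.continuous_eval P).comp (PiLp.continuous_ofLp 2 _)

lemma volume_setOf_eq_zero_of_mem (hf : f ∈ euclideanPolyFunctions d) (hne : f ≠ 0) :
    volume {x | f x = 0} = 0 := by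
  obtain ⟨P, rfl⟩ := (AlgHom.mem_range _).mp hf
  have hP : P ≠ 0 := by rintro rfl; exact hne (map_zero _)
  simp_rw [aeval_euclidean_coord_apply]
  exact (PiLp.volume_preserving_ofLp (Fin d)).measure_preimage
    (isClosed_singleton.preimage (MvPolynomial.continuous_eval P)).nullMeasurableSet ▸
    MvPolynomial.volume_setOf_eval_eq_zero hP

lemma inner_mem (w : EuclideanSpace ℝ (Fin d)) :
    (fun x => ⟪w, x⟫) ∈ euclideanPolyFunctions d := by
  refine (AlgHom.mem_range _).mpr
    ⟨∑ i, MvPolynomial.C (w i) * MvPolynomial.X i, funext fun x => ?_⟩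
  simp [aeval_euclidean_coord_apply, PiLp.inner_apply, mul_comm]

lemma inner_map_mem (w : EuclideanSpace ℝ (Fin d))
    (S : EuclideanSpace ℝ (Fin d) →ₗ[ℝ] EuclideanSpace ℝ (Fin d)) :
    (fun x => ⟪w, S x⟫) ∈ euclideanPolyFunctions d := by
  simpa only [← LinearMap.adjoint_inner_left] using inner_mem (LinearMap.adjoint S w)

lemma inner_self_map_mem (S : EuclideanSpace ℝ (Fin d) →ₗ[ℝ] EuclideanSpace ℝ (Fin d)) :
    (fun x => ⟪x, S x⟫) ∈ euclideanPolyFunctions d := by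
  have h : (fun x => ⟪x, S x⟫) = ∑ i, (fun x => ⟪EuclideanSpace.single i 1, x⟫) *
      fun x => ⟪EuclideanSpace.single i 1, S x⟫ := by
    ext x
    simp [PiLp.inner_apply, mul_comm]
  rw [h]
  exact Subalgebra.sum_mem _ fun i _ => Subalgebra.mul_mem _ (inner_mem _) (inner_map_mem _ _)

lemma pencilGamma_mem (S T : EuclideanSpace ℝ (Fin d) →ₗ[ℝ] EuclideanSpace ℝ (Fin d))
    (v : EuclideanSpace ℝ (Fin d)) : pencilGamma S T v ∈ euclideanPolyFunctions d := by
  have h : pencilGamma S T v = (fun x => ⟪x, S x⟫) * (fun x => ⟪v, T x⟫)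
      - (fun x => ⟪x, T x⟫) * (fun x => ⟪v, S x⟫) := by
    ext x
    simp [pencilGamma, real_inner_comm v]
  rw [h]
  exact sub_mem (mul_mem (inner_self_map_mem S) (inner_map_mem v T))
    (mul_mem (inner_self_map_mem T) (inner_map_mem v S))

lemma toSphere_setOf_eq_zero_of_mem (hf : f ∈ euclideanPolyFunctions d) (hne : f ≠ 0)
    (hcone : ∀ x, f x = 0 → ∀ r : ℝ, 0 < r → f (r • x) = 0) :
    volume.toSphere {x : sphere (0 : EuclideanSpace ℝ (Fin d)) 1 | f x = 0} = 0 :=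
  volume.toSphere_setOf_eq_zero (continuous_of_mem hf) hcone (volume_setOf_eq_zero_of_mem hf hne)

end euclideanPolyFunctions
end PolynomialFunctions

lemma Matrix.PosDef.inner_toEuclideanLin_pos {n : Type*} [Fintype n] [DecidableEq n]
    {M : Matrix n n ℝ} (hM : M.PosDef) {v : EuclideanSpace ℝ n} (hv : v ≠ 0) :
    0 < ⟪v, M.toEuclideanLin v⟫ := by
  rw [EuclideanSpace.inner_eq_star_dotProduct, dotProduct_comm]
  exact hM.dotProduct_mulVec_pos (by simpa using hv)

theorem stmt11_general {m l d : ℕ} (A : Matrix (Fin m) (Fin d) ℝ) (B : Matrix (Fin l) (Fin d) ℝ)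
    (hB : (Bᴴ * B).PosDef) (v : EuclideanSpace ℝ (Fin d))
    (hnev : ¬∃ μ : ℝ, Matrix.toEuclideanLin (Aᴴ * A) v = μ • Matrix.toEuclideanLin (Bᴴ * B) v) :
    (volume : Measure (EuclideanSpace ℝ (Fin d))).toSphere
      {x : sphere (0 : EuclideanSpace ℝ (Fin d)) 1 |
        ⟪(x : EuclideanSpace ℝ (Fin d)), Matrix.toEuclideanLin (Aᴴ * A) x⟫
            * ⟪Matrix.toEuclideanLin (Bᴴ * B) x, v⟫
          - ⟪(x : EuclideanSpace ℝ (Fin d)), Matrix.toEuclideanLin (Bᴴ * B) x⟫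
            * ⟪Matrix.toEuclideanLin (Aᴴ * A) x, v⟫ = 0
        ∨ ⟪v, Matrix.toEuclideanLin (Aᴴ * A) x⟫ * ⟪v, Matrix.toEuclideanLin (Bᴴ * B) v⟫
          - ⟪v, Matrix.toEuclideanLin (Bᴴ * B) x⟫ * ⟪v, Matrix.toEuclideanLin (Aᴴ * A) v⟫ = 0}
      = 0 := by
  set S := toEuclideanLin (Aᴴ * A)
  set T := toEuclideanLin (Bᴴ * B)
  have hS : S.IsSymmetric :=
    isSymmetric_toEuclideanLin_iff.mpr (isHermitian_conjTranspose_mul_self A)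
  have hT : T.IsSymmetric :=
    isSymmetric_toEuclideanLin_iff.mpr (isHermitian_conjTranspose_mul_self B)
  have hv : v ≠ 0 := by rintro rfl; exact hnev ⟨0, by simp⟩
  have hw : pencilResidual S T v ≠ 0 :=
    pencilResidual_ne_zero (hB.inner_toEuclideanLin_pos hv).ne' hnev
  have hγ : volume.toSphere {x : sphere (0 : EuclideanSpace ℝ (Fin d)) 1 |
      pencilGamma S T v x = 0} = 0 := by
    obtain ⟨x, hx⟩ := exists_pencilGamma_ne_zero hS hT hw
    refine euclideanPolyFunctions.toSphere_setOf_eq_zero_of_mem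
      (euclideanPolyFunctions.pencilGamma_mem S T v) (fun h => hx (congrFun h x)) ?_
    intro y hy r _
    rw [pencilGamma_smul, hy, mul_zero]
  have hα : volume.toSphere {x : sphere (0 : EuclideanSpace ℝ (Fin d)) 1 |
      pencilAlpha S T v x = 0} = 0 := by
    rw [funext (pencilAlpha_eq_inner hS hT)]
    refine euclideanPolyFunctions.toSphere_setOf_eq_zero_of_mem
      (euclideanPolyFunctions.inner_mem _) (fun h => inner_self_ne_zero.mpr hw (congrFun h _)) ?_
    intro y hy r _
    rw [real_inner_smul_right, hy, mul_zero]
  exact measure_union_null hγ hα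

theorem stmt11 {m l d : ℕ} (A : Matrix (Fin m) (Fin d) ℝ) (B : Matrix (Fin l) (Fin d) ℝ)
    (hB : (Bᴴ * B).PosDef) (v : EuclideanSpace ℝ (Fin d)) (hv : ‖v‖ = 1)
    (hnev : ¬∃ μ : ℝ, Matrix.toEuclideanLin (Aᴴ * A) v = μ • Matrix.toEuclideanLin (Bᴴ * B) v) :
    (volume : Measure (EuclideanSpace ℝ (Fin d))).toSphere
      {x : sphere (0 : EuclideanSpace ℝ (Fin d)) 1 |
        ⟪(x : EuclideanSpace ℝ (Fin d)), Matrix.toEuclideanLin (Aᴴ * A) x⟫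
            * ⟪Matrix.toEuclideanLin (Bᴴ * B) x, v⟫
          - ⟪(x : EuclideanSpace ℝ (Fin d)), Matrix.toEuclideanLin (Bᴴ * B) x⟫
            * ⟪Matrix.toEuclideanLin (Aᴴ * A) x, v⟫ = 0
        ∨ ⟪v, Matrix.toEuclideanLin (Aᴴ * A) x⟫ * ⟪v, Matrix.toEuclideanLin (Bᴴ * B) v⟫
          - ⟪v, Matrix.toEuclideanLin (Bᴴ * B) x⟫ * ⟪v, Matrix.toEuclideanLin (Aᴴ * A) v⟫ = 0}
      = 0 :=
  stmt11_general A B hB v hnev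
end

section
/- Let (v^k) be iterates maximizing f(v) = ‖Av‖²/‖Bv‖² with v^{k+1} = (v^k + τ_k x^k)/‖v^k + τ_k x^k‖ for unit vectors x^k ∉ span{v^k} and τ_k maximizing τ ↦ f(v^k + τ x^k). Then with a_k = ‖Av^k‖², b_k = ⟨Av^k, Ax^k⟩, c_k = ‖Ax^k‖², d_k = ‖Bv^k‖², e_k = ⟨Bv^k, Bx^k⟩, f_k = ‖Bx^k‖², the one-step increase satisfies f(v^{k+1}) − f(v^k) = τ_k · [b_k(d_k + τ_k² f_k) − e_k(a_k + τ_k² c_k)] / [d_k(d_k + 2τ_k e_k + τ_k² f_k)]. -/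
/-!
Along the line `t ↦ v + t x` both `‖A(v + t x)‖²` and `‖B(v + t x)‖²` are quadratics in `t`,
`P(t) = a + 2bt + ct²` and `Q(t) = e + 2gt + ht²`, and `Q > 0` because `v, x` are independent and
`B` is injective. At the maximizer `τ` of `P/Q` the derivative vanishes, `P'(τ) Q(τ) = P(τ) Q'(τ)`,
which expands to `(be - ag) + τ(ce - ah) + τ²(cg - bh) = 0`. Feeding this into
`P(τ)/Q(τ) - a/e = τ (2(be - ag) + τ(ce - ah)) / (e Q(τ))` gives the formula; scale invariance of
`f` removes the normalization of the new iterate.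
-/

open Matrix RealInnerProductSpace

/-- The generalized Rayleigh quotient `f(v) = ‖Av‖²/‖Bv‖²`. -/
noncomputable def genRayleigh {m l d : ℕ} (A : Matrix (Fin m) (Fin d) ℝ)
    (B : Matrix (Fin l) (Fin d) ℝ) (v : EuclideanSpace ℝ (Fin d)) : ℝ :=
  ‖Matrix.toEuclideanLin A v‖ ^ 2 / ‖Matrix.toEuclideanLin B v‖ ^ 2

theorem IsLocalMax.deriv_mul_eq_mul_deriv_of_div {p q : ℝ → ℝ} {p' q' τ : ℝ}
    (hp : HasDerivAt p p' τ) (hq : HasDerivAt q q' τ) (hqτ : q τ ≠ 0)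
    (hmax : IsLocalMax (fun t => p t / q t) τ) : p' * q τ = p τ * q' := by
  have hzero := hmax.hasDerivAt_eq_zero (hp.div hq hqτ)
  rw [div_eq_zero_iff, sub_eq_zero] at hzero
  exact hzero.resolve_right (pow_ne_zero 2 hqτ)

theorem hasDerivAt_quadratic (a b c τ : ℝ) :
    HasDerivAt (fun t : ℝ => a + 2 * t * b + t ^ 2 * c) (2 * b + 2 * τ * c) τ := by
  have h := ((((hasDerivAt_id' τ).const_mul 2).mul_const b).add
    ((hasDerivAt_pow 2 τ).mul_const c)).const_add a
  refine (h.congr_deriv (by norm_num)).congr_of_eventuallyEq (.of_forall fun t => ?_)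
  simp only [Pi.add_apply]
  ring

theorem add_smul_ne_zero_of_notMem_span {E : Type*} [AddCommGroup E] [Module ℝ E] {v x : E}
    (hv : v ≠ 0) (hx : x ∉ Submodule.span ℝ {v}) (t : ℝ) : v + t • x ≠ 0 := by
  intro hzero
  rcases eq_or_ne t 0 with rfl | ht
  · simp [hv] at hzero
  · refine hx (Submodule.mem_span_singleton.mpr ⟨-t⁻¹, ?_⟩)
    rw [eq_neg_of_add_eq_zero_left hzero, smul_neg, smul_smul, neg_mul, inv_mul_cancel₀ ht,
      neg_smul, neg_neg, one_smul]

theorem LinearMap.norm_sq_map_add_smul {E F : Type*} [NormedAddCommGroup E]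
    [InnerProductSpace ℝ E] [NormedAddCommGroup F] [InnerProductSpace ℝ F] (L : E →ₗ[ℝ] F)
    (v x : E) (t : ℝ) :
    ‖L (v + t • x)‖ ^ 2 = ‖L v‖ ^ 2 + 2 * t * ⟪L v, L x⟫ + t ^ 2 * ‖L x‖ ^ 2 := by
  rw [map_add, map_smul, norm_add_sq_real, real_inner_smul_right, norm_smul, mul_pow,
    Real.norm_eq_abs, sq_abs]
  ring

theorem genRayleigh_smul {m l d : ℕ} (A : Matrix (Fin m) (Fin d) ℝ)
    (B : Matrix (Fin l) (Fin d) ℝ) (v : EuclideanSpace ℝ (Fin d)) {s : ℝ} (hs : s ≠ 0) :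
    genRayleigh A B (s • v) = genRayleigh A B v := by
  simp only [genRayleigh, map_smul, norm_smul, mul_pow]
  exact mul_div_mul_left _ _ (pow_ne_zero 2 (norm_ne_zero_iff.mpr hs))

theorem genRayleigh_add_smul {m l d : ℕ} (A : Matrix (Fin m) (Fin d) ℝ)
    (B : Matrix (Fin l) (Fin d) ℝ) (v x : EuclideanSpace ℝ (Fin d)) (t : ℝ) :
    genRayleigh A B (v + t • x)
      = (‖toEuclideanLin A v‖ ^ 2 + 2 * t * ⟪toEuclideanLin A v, toEuclideanLin A x⟫
          + t ^ 2 * ‖toEuclideanLin A x‖ ^ 2)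
        / (‖toEuclideanLin B v‖ ^ 2 + 2 * t * ⟪toEuclideanLin B v, toEuclideanLin B x⟫
          + t ^ 2 * ‖toEuclideanLin B x‖ ^ 2) := by
  rw [genRayleigh, LinearMap.norm_sq_map_add_smul, LinearMap.norm_sq_map_add_smul]

theorem stmt13_general {m l d : ℕ} (A : Matrix (Fin m) (Fin d) ℝ) (B : Matrix (Fin l) (Fin d) ℝ)
    (hker : ∀ u : EuclideanSpace ℝ (Fin d), Matrix.toEuclideanLin B u = 0 → u = 0)
    (v x : EuclideanSpace ℝ (Fin d)) (hv : ‖v‖ = 1)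
    (hlin : x ∉ Submodule.span ℝ ({v} : Set (EuclideanSpace ℝ (Fin d)))) (τ : ℝ)
    (hτ : ∀ t : ℝ, genRayleigh A B (v + t • x) ≤ genRayleigh A B (v + τ • x))
    (a b c e g h : ℝ)
    (ha : a = ‖Matrix.toEuclideanLin A v‖ ^ 2)
    (hb : b = ⟪Matrix.toEuclideanLin A v, Matrix.toEuclideanLin A x⟫)
    (hc : c = ‖Matrix.toEuclideanLin A x‖ ^ 2)
    (hd : e = ‖Matrix.toEuclideanLin B v‖ ^ 2)
    (he : g = ⟪Matrix.toEuclideanLin B v, Matrix.toEuclideanLin B x⟫)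
    (hf : h = ‖Matrix.toEuclideanLin B x‖ ^ 2) :
    genRayleigh A B (‖v + τ • x‖⁻¹ • (v + τ • x)) - genRayleigh A B v
      = τ * (b * (e + τ ^ 2 * h) - g * (a + τ ^ 2 * c))
          / (e * (e + 2 * τ * g + τ ^ 2 * h)) := by
  have hline (t : ℝ) := genRayleigh_add_smul A B v x t
  rw [← ha, ← hb, ← hc, ← hd, ← he, ← hf] at hline
  have hne := add_smul_ne_zero_of_notMem_span (norm_ne_zero_iff.mp (hv ▸ one_ne_zero)) hlin
  have hQpos (t : ℝ) : 0 < e + 2 * t * g + t ^ 2 * h := by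
    rw [hd, he, hf, ← LinearMap.norm_sq_map_add_smul]
    exact pow_pos (norm_pos_iff.mpr fun h0 => hne t (hker _ h0)) 2
  have he0 : 0 < e := by simpa using hQpos 0
  have hcrit := IsLocalMax.deriv_mul_eq_mul_deriv_of_div (hasDerivAt_quadratic a b c τ)
    (hasDerivAt_quadratic e g h τ) (hQpos τ).ne'
    (Filter.Eventually.of_forall fun t => by simpa only [hline] using hτ t)
  rw [genRayleigh_smul A B _ (inv_ne_zero (norm_ne_zero_iff.mpr (hne τ))), hline τ,
    show genRayleigh A B v = a / e by simpa using hline 0]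
  rw [div_sub_div _ _ (hQpos τ).ne' he0.ne', div_eq_div_iff (mul_pos (hQpos τ) he0).ne'
    (mul_pos he0 (hQpos τ)).ne']
  linear_combination τ * e * (e + 2 * τ * g + τ ^ 2 * h) / 2 * hcrit

theorem stmt13 {m l d : ℕ} (A : Matrix (Fin m) (Fin d) ℝ) (B : Matrix (Fin l) (Fin d) ℝ)
    (hker : ∀ u : EuclideanSpace ℝ (Fin d), Matrix.toEuclideanLin B u = 0 → u = 0)
    (v x : EuclideanSpace ℝ (Fin d)) (hv : ‖v‖ = 1) (hx : ‖x‖ = 1)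
    (hlin : x ∉ Submodule.span ℝ ({v} : Set (EuclideanSpace ℝ (Fin d)))) (τ : ℝ)
    (hτ : ∀ t : ℝ, genRayleigh A B (v + t • x) ≤ genRayleigh A B (v + τ • x))
    (a b c e g h : ℝ)
    (ha : a = ‖Matrix.toEuclideanLin A v‖ ^ 2)
    (hb : b = ⟪Matrix.toEuclideanLin A v, Matrix.toEuclideanLin A x⟫)
    (hc : c = ‖Matrix.toEuclideanLin A x‖ ^ 2)
    (hd : e = ‖Matrix.toEuclideanLin B v‖ ^ 2)
    (he : g = ⟪Matrix.toEuclideanLin B v, Matrix.toEuclideanLin B x⟫)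
    (hf : h = ‖Matrix.toEuclideanLin B x‖ ^ 2) :
    genRayleigh A B (‖v + τ • x‖⁻¹ • (v + τ • x)) - genRayleigh A B v
      = τ * (b * (e + τ ^ 2 * h) - g * (a + τ ^ 2 * c))
          / (e * (e + 2 * τ * g + τ ^ 2 * h)) :=
  stmt13_general A B hker v x hv hlin τ hτ a b c e g h ha hb hc hd he hf
end
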